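/- Let X be a lattice design with n runs, s factors and q levels, and let 1 ≤ t ≤ s. Then X has orthogonal strength t, i.e. for every subset u ⊆ {1,…,s} with |u| = t and every level combination x ∈ (Fin q)^u the count N_x^{(u)} equals n/q^t, if and only if Ψ_C(X; j) = 0 for all j = 1, …, t. -/

import Mathlib

/-! Counting in two ways the pairs of runs that agree on a `j`-set of factors `u` gives
`∑_{|u| = j} ∑_x (N_x^{(u)})² = ∑_{i,k} C(β(x_i, x_k), j)`. Since `∑_x N_x^{(u)} = n`, this turns
`Ψ_C(X; j)` into the sum of squares `∑_{|u| = j} ∑_x (N_x^{(u)} - n / q^j)²`, which vanishes exactly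
when `X` has strength `j`. Strength `t` implies strength `j ≤ t` by summing out factors one at a
time. -/

open Finset

/-- The coincidence number β(x, w) = #{j : x_j = w_j} of two lattice points. -/
def coincidence {s q : ℕ} (x w : Fin s → Fin q) : ℕ :=
  (univ.filter fun j => x j = w j).card

/-- The index set of pairs 1 ≤ i < k ≤ n. -/
def pairs (n : ℕ) : Finset (Fin n × Fin n) := univ.filter fun p => p.1 < p.2

/-- `N_x^{(u)}`: the number of runs of `X` whose `u`-coordinates equal the level
combination `x`. -/
def projCount {n s q : ℕ} (X : Fin n → Fin s → Fin q) (u : Finset (Fin s))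
    (x : ↥u → Fin q) : ℕ :=
  (univ.filter fun i => ∀ j : ↥u, X i j = x j).card

/-- The Schur-combinatorial criterion
Ψ_C(X; j) = 2 ∑_{i<k} C(β(x_i,x_k), j) − C(s,j)(n²/qʲ − n). -/
noncomputable def PsiC {n s q : ℕ} (X : Fin n → Fin s → Fin q) (j : ℕ) : ℝ :=
  2 * ∑ p ∈ pairs n, ((coincidence (X p.1) (X p.2)).choose j : ℝ)
    - (s.choose j : ℝ) * ((n : ℝ) ^ 2 / (q : ℝ) ^ j - n)

theorem sum_card_fiber_sq {α β : Type*} [Fintype α] [Fintype β] [DecidableEq β] (f : α → β) :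
    ∑ b, #{a | f a = b} ^ 2 = ∑ a, ∑ a', if f a = f a' then 1 else 0 := by
  simp_rw [sq, card_filter, sum_mul_sum, ite_zero_mul_ite_zero, mul_one]
  rw [sum_comm]
  refine sum_congr rfl fun a _ => ?_
  rw [sum_comm]
  refine sum_congr rfl fun a' _ => ?_
  simp_rw [ite_and, sum_ite_eq, mem_univ, if_true, eq_comm]

theorem filter_powersetCard_forall_mem {α : Type*} [Fintype α] (p : α → Prop) [DecidablePred p]
    (j : ℕ) : {u ∈ powersetCard j (univ : Finset α) | ∀ a ∈ u, p a} = powersetCard j {a | p a} := by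
  ext u
  simp [subset_iff, and_comm]

theorem sum_sum_eq_two_nsmul_sum_pairs_add {M : Type*} [AddCommMonoid M] {n : ℕ}
    (g : Fin n → Fin n → M) (hg : ∀ i k, g i k = g k i) :
    ∑ i, ∑ k, g i k = 2 • ∑ p ∈ pairs n, g p.1 p.2 + ∑ i, g i i := by
  have hsplit : ∀ i k, g i k =
      (if i < k then g i k else 0) + (if k < i then g k i else 0) + (if i = k then g i k else 0) := by
    intro i k
    rcases lt_trichotomy i k with h | rfl | h
    · simp [h, h.not_gt, h.ne]
    · simp
    · simp [h, h.not_gt, h.ne', hg i k]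
  have hpairs : ∑ p ∈ pairs n, g p.1 p.2 = ∑ i, ∑ k, if i < k then g i k else 0 := by
    rw [pairs, sum_filter, Fintype.sum_prod_type]
  calc ∑ i, ∑ k, g i k
      = ∑ i, ∑ k, ((if i < k then g i k else 0) + (if k < i then g k i else 0)
          + (if i = k then g i k else 0)) := by simp only [← hsplit]
    _ = _ := by
      simp only [sum_add_distrib, sum_ite_eq]
      rw [sum_comm (f := fun i k => if k < i then g k i else 0), two_nsmul, hpairs]
      simp

theorem coincidence_comm {s q : ℕ} (x w : Fin s → Fin q) :
    coincidence x w = coincidence w x := by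
  simp only [coincidence, eq_comm]

@[simp]
theorem coincidence_self {s q : ℕ} (x : Fin s → Fin q) : coincidence x x = s := by
  simp [coincidence]

theorem sum_powersetCard_agree_eq_choose {s q : ℕ} (x w : Fin s → Fin q) (j : ℕ) :
    ∑ u ∈ powersetCard j (univ : Finset (Fin s)), (if ∀ l ∈ u, x l = w l then 1 else 0)
      = (coincidence x w).choose j := by
  rw [sum_boole, Nat.cast_id, coincidence, ← card_powersetCard]
  convert congrArg card (filter_powersetCard_forall_mem (fun l => x l = w l) j) using 3

theorem sum_projCount_sq {n s q : ℕ} (X : Fin n → Fin s → Fin q) (u : Finset (Fin s)) :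
    ∑ x : ↥u → Fin q, projCount X u x ^ 2
      = ∑ i, ∑ k, if ∀ l ∈ u, X i l = X k l then 1 else 0 := by
  have hfiber : ∀ x, projCount X u x = #{i | (fun l : ↥u => X i l) = x} := by
    simp [projCount, funext_iff]
  simp_rw [hfiber, sum_card_fiber_sq, funext_iff, Subtype.forall]

theorem sum_sum_projCount_sq {n s q : ℕ} (X : Fin n → Fin s → Fin q) (j : ℕ) :
    ∑ u ∈ powersetCard j (univ : Finset (Fin s)), ∑ x : ↥u → Fin q, projCount X u x ^ 2
      = 2 * ∑ p ∈ pairs n, (coincidence (X p.1) (X p.2)).choose j + n * s.choose j := by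
  simp_rw [sum_projCount_sq]
  rw [sum_comm]
  simp_rw [sum_comm (s := powersetCard j _), sum_powersetCard_agree_eq_choose]
  rw [sum_sum_eq_two_nsmul_sum_pairs_add _ fun i k => by rw [coincidence_comm]]
  simp

theorem sum_sq_sub_div_card {ι : Type*} [Fintype ι] (f : ι → ℝ) :
    ∑ i, (f i - (∑ i, f i) / Fintype.card ι) ^ 2
      = ∑ i, f i ^ 2 - (∑ i, f i) ^ 2 / Fintype.card ι := by
  set m : ℝ := (Fintype.card ι : ℝ)
  set S := ∑ i, f i
  have hmS : m * (S / m) ^ 2 = S ^ 2 / m := by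
    rcases eq_or_ne m 0 with hm | hm
    · simp [hm]
    · field_simp
  calc ∑ i, (f i - S / m) ^ 2 = ∑ i, f i ^ 2 - 2 * (S / m) * S + m * (S / m) ^ 2 := by
        simp only [sub_sq, sum_add_distrib, sum_sub_distrib, sum_const, card_univ, nsmul_eq_mul,
          ← sum_mul, ← mul_sum]
        ring
    _ = ∑ i, f i ^ 2 - S ^ 2 / m := by rw [hmS]; ring

theorem sum_projCount {n s q : ℕ} (X : Fin n → Fin s → Fin q) (u : Finset (Fin s)) :
    ∑ x : ↥u → Fin q, projCount X u x = n := by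
  simpa [projCount, funext_iff] using
    (card_eq_sum_card_fiberwise (f := fun i : Fin n => fun l : ↥u => X i l) (s := univ)
      (t := univ) (fun _ _ => mem_coe.2 (mem_univ _))).symm

theorem psiC_eq_sum_sq {n s q : ℕ} (X : Fin n → Fin s → Fin q) (j : ℕ) :
    PsiC X j = ∑ u ∈ powersetCard j (univ : Finset (Fin s)), ∑ x : ↥u → Fin q,
      ((projCount X u x : ℝ) - n / (q : ℝ) ^ j) ^ 2 := by
  have hvar : ∀ u ∈ powersetCard j (univ : Finset (Fin s)),
      ∑ x : ↥u → Fin q, ((projCount X u x : ℝ) - n / (q : ℝ) ^ j) ^ 2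
        = ∑ x : ↥u → Fin q, (projCount X u x : ℝ) ^ 2 - n ^ 2 / (q : ℝ) ^ j := by
    intro u hu
    have hcard : (Fintype.card (↥u → Fin q) : ℝ) = (q : ℝ) ^ j := by
      simp [(mem_powersetCard.1 hu).2]
    have hsum : ∑ x : ↥u → Fin q, (projCount X u x : ℝ) = n := by
      exact_mod_cast sum_projCount X u
    simpa only [hcard, hsum] using sum_sq_sub_div_card fun x : ↥u → Fin q => (projCount X u x : ℝ)
  have hsq : ∑ u ∈ powersetCard j (univ : Finset (Fin s)), ∑ x : ↥u → Fin q,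
      (projCount X u x : ℝ) ^ 2
        = 2 * ∑ p ∈ pairs n, ((coincidence (X p.1) (X p.2)).choose j : ℝ) + n * s.choose j := by
    exact_mod_cast sum_sum_projCount_sq X j
  rw [sum_congr rfl hvar, sum_sub_distrib, hsq, sum_const, card_powersetCard, card_univ,
    Fintype.card_fin, nsmul_eq_mul, PsiC]
  ring

theorem projCount_eq_sum_insert {n s q : ℕ} (X : Fin n → Fin s → Fin q) {u : Finset (Fin s)}
    {a : Fin s} (ha : a ∉ u) (x : ↥u → Fin q) :
    projCount X u x = ∑ v : Fin q, projCount X (insert a u)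
      (fun l => if h : (l : Fin s) ∈ u then x ⟨l, h⟩ else v) := by
  rw [projCount, card_eq_sum_card_fiberwise (f := fun i => X i a) (t := univ)
    (fun _ _ => mem_coe.2 (mem_univ _))]
  refine sum_congr rfl fun v _ => ?_
  rw [filter_filter, projCount]
  congr 1
  refine filter_congr fun i _ => ?_
  simp only [Subtype.forall, mem_insert]
  constructor
  · rintro ⟨hu, rfl⟩ l (rfl | hl)
    · rw [dif_neg ha]
    · rw [dif_pos hl, hu l hl]
  · intro h
    refine ⟨fun l hl => by rw [h l (.inr hl), dif_pos hl], by rw [h a (.inl rfl), dif_neg ha]⟩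

def HasStrength {n s q : ℕ} (X : Fin n → Fin s → Fin q) (t : ℕ) : Prop :=
  ∀ u ∈ powersetCard t (univ : Finset (Fin s)), ∀ x : ↥u → Fin q,
    (projCount X u x : ℝ) = (n : ℝ) / (q : ℝ) ^ t

theorem HasStrength.of_succ {n s q : ℕ} (hq : q ≠ 0) {X : Fin n → Fin s → Fin q} {j : ℕ}
    (hX : HasStrength X (j + 1)) (hjs : j < s) : HasStrength X j := by
  intro u hu x
  have hcard : #u = j := (mem_powersetCard.1 hu).2
  have hu_ne : u ≠ univ := by
    rintro rfl
    rw [card_univ, Fintype.card_fin] at hcard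
    omega
  obtain ⟨a, -, ha⟩ := exists_of_ssubset (ssubset_univ_iff.2 hu_ne)
  have hins : insert a u ∈ powersetCard (j + 1) (univ : Finset (Fin s)) :=
    mem_powersetCard.2 ⟨subset_univ _, by rw [card_insert_of_notMem ha, hcard]⟩
  rw [projCount_eq_sum_insert X ha, Nat.cast_sum, sum_congr rfl fun v _ => hX _ hins _,
    sum_const, card_univ, Fintype.card_fin, nsmul_eq_mul, pow_succ]
  field_simp

theorem HasStrength.mono {n s q : ℕ} (hq : q ≠ 0) {X : Fin n → Fin s → Fin q} {t j : ℕ}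
    (hX : HasStrength X t) (hts : t ≤ s) (hjt : j ≤ t) : HasStrength X j :=
  Nat.decreasingInduction (motive := fun j _ => HasStrength X j)
    (fun _ hk hX' => hX'.of_succ hq (by omega)) hX hjt

theorem psiC_eq_zero_iff_hasStrength {n s q : ℕ} (X : Fin n → Fin s → Fin q) (j : ℕ) :
    PsiC X j = 0 ↔ HasStrength X j := by
  rw [psiC_eq_sum_sq, sum_eq_zero_iff_of_nonneg fun _ _ => sum_nonneg fun _ _ => sq_nonneg _]
  simp only [HasStrength, mem_univ, sum_eq_zero_iff_of_nonneg fun _ _ => sq_nonneg _,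
    forall_const, sq_eq_zero_iff, sub_eq_zero]

/-- Theorem 2 (second part): a lattice design has orthogonal strength `t`
(all level combinations appear `n/qᵗ` times in every `t`-factor projection)
if and only if Ψ_C(X; j) = 0 for j = 1, …, t. -/
theorem strength_iff_psiC_zero (n s q : ℕ) (hq : 2 ≤ q)
    (X : Fin n → Fin s → Fin q) (t : ℕ) (ht1 : 1 ≤ t) (hts : t ≤ s) :
    (∀ u ∈ powersetCard t (univ : Finset (Fin s)), ∀ x : ↥u → Fin q,
        (projCount X u x : ℝ) = (n : ℝ) / (q : ℝ) ^ t) ↔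
      (∀ j, 1 ≤ j → j ≤ t → PsiC X j = 0) := by
  change HasStrength X t ↔ _
  refine ⟨fun hX j _ hjt => ?_, fun h => ?_⟩
  · exact (psiC_eq_zero_iff_hasStrength X j).2 (hX.mono (by omega) hts hjt)
  · exact (psiC_eq_zero_iff_hasStrength X t).1 (h t ht1 le_rfl)
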